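/- Let c > 2 be a real number, let G be a simple graph with n ≥ 1 vertices and m edges such that every independent set of G has size at most n/c, let k ≥ 1 be an integer, and let H be the (2k)-subdivision of G, which has N = n + 2km vertices. Then every (p:q)-coloring of H satisfies q·(n + 2km) ≤ p·(n/c + m·k); in particular p/q ≥ N/(n/c + mk). -/

import Mathlib

/-- A set of vertices is independent if no two of its elements are adjacent. -/
def IsIndepSet {V : Type*} (G : SimpleGraph V) (S : Set V) : Prop :=
  ∀ u ∈ S, ∀ w ∈ S, ¬ G.Adj u w

/-- `H` is the `(2k)`-subdivision of `G`: every edge `e = {u,v}` of `G` is replaced by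
a path `(u, w^e_1, …, w^e_{2k}, v)` with `2k` new inner vertices, distinct inner
vertices for distinct edges. -/
structure IsSubdivision2k {V W : Type*} (G : SimpleGraph V) (k : ℕ) (H : SimpleGraph W) where
  /-- images of the original vertices -/
  vmap : V → W
  /-- the inner path nodes of each edge -/
  inner : G.edgeSet → Fin (2 * k) → W
  /-- a choice of the two endpoints of each edge -/
  ends : G.edgeSet → V × V
  ends_eq : ∀ e : G.edgeSet, (e : Sym2 V) = s((ends e).1, (ends e).2)
  vmap_inj : Function.Injective vmap
  inner_inj : Function.Injective fun pr : G.edgeSet × Fin (2 * k) => inner pr.1 pr.2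
  vmap_ne_inner : ∀ (a : V) (e : G.edgeSet) (i : Fin (2 * k)), vmap a ≠ inner e i
  cover : ∀ w : W, (∃ a : V, w = vmap a) ∨ ∃ (e : G.edgeSet) (i : Fin (2 * k)), w = inner e i
  adj_iff : ∀ x y : W, H.Adj x y ↔
    (∃ (e : G.edgeSet) (i j : Fin (2 * k)), (i : ℕ) + 1 = (j : ℕ) ∧
        ((x = inner e i ∧ y = inner e j) ∨ (x = inner e j ∧ y = inner e i))) ∨
    (∃ (e : G.edgeSet) (i : Fin (2 * k)), (i : ℕ) = 0 ∧
        ((x = vmap (ends e).1 ∧ y = inner e i) ∨ (y = vmap (ends e).1 ∧ x = inner e i))) ∨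
    (∃ (e : G.edgeSet) (i : Fin (2 * k)), (i : ℕ) = 2 * k - 1 ∧
        ((x = vmap (ends e).2 ∧ y = inner e i) ∨ (y = vmap (ends e).2 ∧ x = inner e i)))

/-- A `(p:q)`-coloring of `G`: each vertex gets a set of at least `q` colors out of
`p` colors, with adjacent vertices receiving disjoint sets. -/
def HasPQColoring {V : Type*} (G : SimpleGraph V) (p q : ℕ) : Prop :=
  ∃ X : V → Finset (Fin p), (∀ v, q ≤ (X v).card) ∧
    ∀ ⦃u v⦄, G.Adj u v → Disjoint (X u) (X v)

/-! Each colour class of a `(p:q)`-colouring is independent, so double counting gives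
`q · |V(H)| ≤ p · α(H)`, and it remains to show `α(H) ≤ α(G) + k m`. Let `I` be independent in
`H` and `A` its set of original vertices. On the path of an edge `e`, `I` contains at most `k`
of the `2k` inner nodes, and at most `k - 1` if both ends of `e` lie in `A`. Hence
`|I| ≤ |A| + k m - e(A)`, where `e(A)` counts the edges of `G` inside `A`; and removing one
endpoint of each edge inside `A` leaves an independent set of `G`, so `|A| - e(A) ≤ α(G)`. -/

open Finset

theorem Finset.card_le_of_subset_Ico_of_succ_notMem {S : Finset ℕ} {a j : ℕ}
    (hS : S ⊆ Ico a (a + 2 * j)) (hsucc : ∀ i ∈ S, i + 1 ∉ S) : #S ≤ j := by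
  have hmaps : Set.MapsTo (fun i => (i - a) / 2) S (range j) := fun i hi => by
    have := mem_Ico.1 (hS hi)
    simp only [coe_range, Set.mem_Iio]
    omega
  have hinj : Set.InjOn (fun i => (i - a) / 2) S := fun i hi i' hi' h => by
    have := mem_Ico.1 (hS hi)
    have := mem_Ico.1 (hS hi')
    have := hsucc i hi
    have := hsucc i' hi'
    by_contra hne
    rcases (show i + 1 = i' ∨ i' + 1 = i by simp only at h; omega) with rfl | rfl <;> simp_all
  simpa using card_le_card_of_injOn _ hmaps hinj

theorem isIndepSet_iff_graph_isIndepSet {V : Type*} {G : SimpleGraph V} {S : Set V} :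
    IsIndepSet G S ↔ G.IsIndepSet S :=
  ⟨fun h _ hu _ hw _ => h _ hu _ hw, fun h u hu _ hw huw =>
    h hu hw (fun hne => G.loopless.irrefl u (hne ▸ huw)) huw⟩

namespace SimpleGraph

variable {V : Type*} [DecidableEq V] (G : SimpleGraph V) [Fintype G.edgeSet]

def edgesWithin (A : Finset V) : Finset G.edgeSet := {e | (e : Sym2 V) ∈ A.sym2}

variable {G} in
theorem mem_edgesWithin {A : Finset V} {e : G.edgeSet} :
    e ∈ G.edgesWithin A ↔ ∀ v ∈ (e : Sym2 V), v ∈ A := by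
  simp [edgesWithin, mem_sym2_iff]

theorem edgesWithin_mono {A B : Finset V} (h : A ⊆ B) : G.edgesWithin A ⊆ G.edgesWithin B :=
  monotone_filter_right _ fun _ _ he => sym2_mono h he

theorem exists_isIndepSet_subset_card_le (A : Finset V) :
    ∃ S ⊆ A, G.IsIndepSet S ∧ #A ≤ #S + #(G.edgesWithin A) := by
  induction A using Finset.induction_on with
  | empty => exact ⟨∅, subset_rfl, by simp, by simp⟩
  | insert v A hv ih =>
    obtain ⟨S, hSA, hS, hcard⟩ := ih
    have hmono := G.edgesWithin_mono (subset_insert v A)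
    rw [card_insert_of_notMem hv]
    by_cases hnbr : ∃ u ∈ A, G.Adj v u
    · obtain ⟨u, hu, hvu⟩ := hnbr
      have hnew : G.edgesWithin A ⊂ G.edgesWithin (insert v A) := by
        refine (ssubset_iff_of_subset hmono).2 ⟨⟨s(v, u), hvu⟩, ?_, ?_⟩
        · simp [mem_edgesWithin, hu]
        · simp [mem_edgesWithin, hv]
      have := card_lt_card hnew
      exact ⟨S, hSA.trans (subset_insert v A), hS, by omega⟩
    · push Not at hnbr
      refine ⟨insert v S, insert_subset_insert v hSA, ?_, ?_⟩
      · rw [coe_insert, IsIndepSet, Set.pairwise_insert]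
        exact ⟨hS, fun w hw _ => ⟨hnbr w (hSA hw), fun h => hnbr w (hSA hw) h.symm⟩⟩
      · have := card_le_card hmono
        rw [card_insert_of_notMem (fun h => hv (hSA h))]
        omega

end SimpleGraph

theorem HasPQColoring.mul_card_le {W : Type*} [Fintype W] {H : SimpleGraph W} {p q : ℕ}
    (hcol : HasPQColoring H p q) {α : ℝ}
    (hα : ∀ I : Finset W, H.IsIndepSet I → (#I : ℝ) ≤ α) :
    (q * Fintype.card W : ℝ) ≤ p * α := by
  obtain ⟨X, hXq, hXdisj⟩ := hcol
  have hclass (i : Fin p) : H.IsIndepSet ({w | i ∈ X w} : Finset W) := fun u hu w hw _ huw =>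
    disjoint_left.1 (hXdisj huw) (by simpa using hu) (by simpa using hw)
  have hcount : ∑ w, #(X w) = ∑ i, #{w | i ∈ X w} := by
    simpa [bipartiteAbove, bipartiteBelow] using
      sum_card_bipartiteAbove_eq_sum_card_bipartiteBelow (s := univ) (t := univ)
        (r := fun w i => i ∈ X w)
  calc (q * Fintype.card W : ℝ) = ∑ _w : W, (q : ℝ) := by simp [mul_comm]
    _ ≤ ∑ w, (#(X w) : ℝ) := by gcongr with w; exact_mod_cast hXq w
    _ = ∑ i, (#{w | i ∈ X w} : ℝ) := by exact_mod_cast hcount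
    _ ≤ ∑ _i : Fin p, α := sum_le_sum fun i _ => hα _ (hclass i)
    _ = p * α := by simp

namespace IsSubdivision2k

variable {V W : Type*} {G : SimpleGraph V} {k : ℕ} {H : SimpleGraph W}
  (sub : IsSubdivision2k G k H)

theorem adj_inner_inner {e : G.edgeSet} {i j : Fin (2 * k)} (h : (i : ℕ) + 1 = j) :
    H.Adj (sub.inner e i) (sub.inner e j) :=
  (sub.adj_iff _ _).2 (Or.inl ⟨e, i, j, h, Or.inl ⟨rfl, rfl⟩⟩)

theorem adj_fst_inner {e : G.edgeSet} {i : Fin (2 * k)} (h : (i : ℕ) = 0) :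
    H.Adj (sub.vmap (sub.ends e).1) (sub.inner e i) :=
  (sub.adj_iff _ _).2 (Or.inr (Or.inl ⟨e, i, h, Or.inl ⟨rfl, rfl⟩⟩))

theorem adj_snd_inner {e : G.edgeSet} {i : Fin (2 * k)} (h : (i : ℕ) = 2 * k - 1) :
    H.Adj (sub.vmap (sub.ends e).2) (sub.inner e i) :=
  (sub.adj_iff _ _).2 (Or.inr (Or.inr ⟨e, i, h, Or.inl ⟨rfl, rfl⟩⟩))

variable [DecidableEq W]

def innerIndices (I : Finset W) (e : G.edgeSet) : Finset ℕ :=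
  ({i | sub.inner e i ∈ I} : Finset (Fin (2 * k))).map Fin.valEmbedding

theorem mem_innerIndices {I : Finset W} {e : G.edgeSet} {x : ℕ} :
    x ∈ sub.innerIndices I e ↔ ∃ h : x < 2 * k, sub.inner e ⟨x, h⟩ ∈ I := by
  simp [innerIndices, Fin.exists_iff]

theorem card_innerIndices (I : Finset W) (e : G.edgeSet) :
    #(sub.innerIndices I e) = #{i | sub.inner e i ∈ I} :=
  card_map _

theorem succ_notMem_innerIndices {I : Finset W} (hI : H.IsIndepSet I) {e : G.edgeSet} {x : ℕ}
    (hx : x ∈ sub.innerIndices I e) : x + 1 ∉ sub.innerIndices I e := by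
  rw [mem_innerIndices] at hx ⊢
  rintro ⟨hlt, hxI⟩
  obtain ⟨_, hxI'⟩ := hx
  have hadj := sub.adj_inner_inner (e := e) (i := ⟨x, by omega⟩) (j := ⟨x + 1, hlt⟩) rfl
  exact hI hxI' hxI hadj.ne hadj

theorem card_innerIndices_le {I : Finset W} (hI : H.IsIndepSet I) (e : G.edgeSet) :
    #(sub.innerIndices I e) ≤ k := by
  refine card_le_of_subset_Ico_of_succ_notMem (a := 0) (fun x hx => ?_)
    fun _ => sub.succ_notMem_innerIndices hI
  obtain ⟨h, -⟩ := sub.mem_innerIndices.1 hx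
  simpa using h

theorem card_innerIndices_lt (hk : 1 ≤ k) {I : Finset W} (hI : H.IsIndepSet I) {e : G.edgeSet}
    (h₁ : sub.vmap (sub.ends e).1 ∈ I) (h₂ : sub.vmap (sub.ends e).2 ∈ I) :
    #(sub.innerIndices I e) < k := by
  suffices #(sub.innerIndices I e) ≤ k - 1 by omega
  refine card_le_of_subset_Ico_of_succ_notMem (a := 1) (fun x hx => ?_)
    fun _ => sub.succ_notMem_innerIndices hI
  obtain ⟨h, hxI⟩ := sub.mem_innerIndices.1 hx
  have h0 : x ≠ 0 := fun hx0 => hI h₁ hxI (sub.vmap_ne_inner _ _ _) (sub.adj_fst_inner hx0)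
  have hlast : x ≠ 2 * k - 1 := fun hxl =>
    hI h₂ hxI (sub.vmap_ne_inner _ _ _) (sub.adj_snd_inner hxl)
  rw [mem_Ico]
  omega

variable [Fintype V] [Fintype G.edgeSet]

theorem card_le_card_vmap_add_sum_innerIndices (I : Finset W) :
    #I ≤ #{a | sub.vmap a ∈ I} + ∑ e, #(sub.innerIndices I e) := by
  have hcover : I ⊆ ({a | sub.vmap a ∈ I} : Finset V).image sub.vmap ∪
      univ.biUnion fun e =>
        ({i | sub.inner e i ∈ I} : Finset (Fin (2 * k))).image (sub.inner e) := by
    intro w hw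
    rcases sub.cover w with ⟨a, rfl⟩ | ⟨e, i, rfl⟩
    · exact mem_union_left _ (mem_image_of_mem _ (by simpa using hw))
    · exact mem_union_right _
        (mem_biUnion.2 ⟨e, mem_univ e, mem_image_of_mem _ (by simpa using hw)⟩)
  calc #I ≤ _ := card_le_card hcover
    _ ≤ _ := card_union_le _ _
    _ ≤ _ := add_le_add card_image_le
      (card_biUnion_le.trans (sum_le_sum fun e _ => card_image_le))
    _ = _ := by simp only [card_innerIndices]

end IsSubdivision2k

theorem IsSubdivision2k.exists_isIndepSet_card_le {V W : Type*} [Fintype V] [DecidableEq V]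
    [DecidableEq W] {G : SimpleGraph V} [Fintype G.edgeSet] {k : ℕ} {H : SimpleGraph W}
    (sub : IsSubdivision2k G k H) (hk : 1 ≤ k) {I : Finset W} (hI : H.IsIndepSet I) :
    ∃ S : Finset V, G.IsIndepSet S ∧ #I ≤ #S + k * Fintype.card G.edgeSet := by
  set A : Finset V := {a | sub.vmap a ∈ I}
  obtain ⟨S, -, hS, hA⟩ := G.exists_isIndepSet_subset_card_le A
  have hedge : ∀ e, #(sub.innerIndices I e) + (if e ∈ G.edgesWithin A then 1 else 0) ≤ k := by
    intro e
    split_ifs with he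
    · rw [SimpleGraph.mem_edgesWithin, sub.ends_eq e] at he
      exact sub.card_innerIndices_lt hk hI (by simpa [A] using he _ (Sym2.mem_mk_left _ _))
        (by simpa [A] using he _ (Sym2.mem_mk_right _ _))
    · simpa using sub.card_innerIndices_le hI e
  refine ⟨S, hS, ?_⟩
  calc #I ≤ #A + ∑ e, #(sub.innerIndices I e) := sub.card_le_card_vmap_add_sum_innerIndices I
    _ ≤ #S + (#(G.edgesWithin A) + ∑ e, #(sub.innerIndices I e)) := by omega
    _ = #S + ∑ e, (#(sub.innerIndices I e) + if e ∈ G.edgesWithin A then 1 else 0) := by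
      rw [sum_add_distrib, sum_boole, filter_mem_eq_inter, univ_inter, Nat.cast_id]
      ring
    _ ≤ #S + k * Fintype.card G.edgeSet := by
      grw [sum_le_sum fun e _ => hedge e, sum_const, card_univ, smul_eq_mul, mul_comm]

theorem pq_coloring_subdivision_bound_general {V W : Type*} [Fintype V] [Fintype W]
    (G : SimpleGraph V) (c : ℝ)
    (n m : ℕ) (hm : m = Nat.card G.edgeSet)
    (hind : ∀ S : Set V, IsIndepSet G S → (S.ncard : ℝ) ≤ (n : ℝ) / c)
    (k : ℕ) (hk : 1 ≤ k) (H : SimpleGraph W) (sub : IsSubdivision2k G k H)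
    (hN : Nat.card W = n + 2 * k * m)
    (p q : ℕ) (hq : 1 ≤ q) (hcol : HasPQColoring H p q) :
    (q : ℝ) * ((n : ℝ) + 2 * k * m) ≤ (p : ℝ) * ((n : ℝ) / c + m * k) ∧
    ((n : ℝ) + 2 * k * m) / ((n : ℝ) / c + m * k) ≤ (p : ℝ) / (q : ℝ) := by
  classical
  have hα (I : Finset W) (hI : H.IsIndepSet I) : (#I : ℝ) ≤ n / c + m * k := by
    obtain ⟨S, hS, hIS⟩ := sub.exists_isIndepSet_card_le hk hI
    have hSc := hind S (isIndepSet_iff_graph_isIndepSet.2 hS)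
    rw [Set.ncard_coe_finset] at hSc
    rw [hm, Nat.card_eq_fintype_card]
    calc (#I : ℝ) ≤ #S + k * Fintype.card G.edgeSet := by exact_mod_cast hIS
      _ ≤ n / c + Fintype.card G.edgeSet * k := by linarith
  have hbound := hcol.mul_card_le hα
  rw [← Nat.card_eq_fintype_card, hN] at hbound
  push_cast at hbound
  refine ⟨hbound, ?_⟩
  have hD : 0 ≤ (n : ℝ) / c + m * k :=
    add_nonneg (by simpa using hind ∅ fun _ h => h.elim) (by positivity)
  rcases hD.eq_or_lt with hD0 | hDpos
  · rw [← hD0, div_zero]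
    positivity
  · rw [div_le_div_iff₀ hDpos (by exact_mod_cast hq)]
    linarith

/-- if every independent set of `G` (with `n ≥ 1` vertices, `m` edges)
has size at most `n/c` for a real `c > 2`, and `H` is the `(2k)`-subdivision of `G`
(which has `N = n + 2km` vertices), then every `(p:q)`-coloring of `H` satisfies
`q·(n + 2km) ≤ p·(n/c + m·k)`; in particular `p/q ≥ N/(n/c + mk)`. -/
theorem pq_coloring_subdivision_bound {V W : Type*} [Fintype V] [Fintype W]
    (G : SimpleGraph V) (c : ℝ) (hc : 2 < c)
    (n m : ℕ) (hn : n = Nat.card V) (hn1 : 1 ≤ n) (hm : m = Nat.card G.edgeSet)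
    (hind : ∀ S : Set V, IsIndepSet G S → (S.ncard : ℝ) ≤ (n : ℝ) / c)
    (k : ℕ) (hk : 1 ≤ k) (H : SimpleGraph W) (sub : IsSubdivision2k G k H)
    (hN : Nat.card W = n + 2 * k * m)
    (p q : ℕ) (hq : 1 ≤ q) (hpq : q ≤ p) (hcol : HasPQColoring H p q) :
    (q : ℝ) * ((n : ℝ) + 2 * k * m) ≤ (p : ℝ) * ((n : ℝ) / c + m * k) ∧
    ((n : ℝ) + 2 * k * m) / ((n : ℝ) / c + m * k) ≤ (p : ℝ) / (q : ℝ) :=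
  pq_coloring_subdivision_bound_general G c n m hm hind k hk H sub hN p q hq hcol
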